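/- Let B_1,…,B_n be p×m complex matrices with F_0(z) = ∑_{j=1}^n z^{-j} B_j satisfying F_0(z) F_0(z)* = I_p for all z on the unit circle, and let H_0 be the associated np×nm block Hankel matrix. Then I_{np} − H_0 H_0* is positive semidefinite, satisfies I_{np} − H_0 H_0* ≤ I_{np}, and all of its entries in the first p rows and in the first p columns vanish; that is, I_{np} − H_0 H_0* = diag(0_{p×p}, Δ) for some (np−p)×(np−p) positive semidefinite matrix Δ with Δ ≤ I. -/

import Mathlib

/-!
Expanding `F₀(z) F₀(z)ᴴ` on the unit circle, where `z̄ = z⁻¹`, gives a Laurent polynomial whose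
coefficient of `z^d` is the block autocorrelation `∑ₛ B_s B_{s+d}ᴴ`; co-isometry forces these to
be `δ_{d0} I`. Row `i` of the block matrix `[G H₀]`, with `G` the strictly lower triangular block
Toeplitz matrix `G_{iu} = B_{i-u}` (`u < i`), lists every `B_s` once, so the `(i, k)` block of
`H₀ H₀ᴴ + G Gᴴ` is the autocorrelation at lag `k - i`. Hence `I - H₀ H₀ᴴ = G Gᴴ ≥ 0`, and it
vanishes on the first block row and column because the first block row of `G` is zero.
-/

open Matrix Finset ComplexOrder

theorem Complex.infinite_sphere_zero_one : (Metric.sphere (0 : ℂ) 1).Infinite :=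
  (isPreconnected_sphere (by simp [Complex.rank_real_complex]) 0 1).infinite_of_nontrivial
    ⟨1, by simp, -1, by simp, by norm_num⟩

theorem sum_filter_eq_ite_of_sum_zpow_eq_const_on_circle {ι : Type*} (s : Finset ι) (e : ι → ℤ)
    (c : ι → ℂ) (w : ℂ) (h : ∀ z : ℂ, ‖z‖ = 1 → ∑ i ∈ s, z ^ e i * c i = w) (d : ℤ) :
    ∑ i ∈ s with e i = d, c i = if d = 0 then w else 0 := by
  -- Multiplying by `z ^ N` turns both sides into polynomials agreeing on the infinite unit circle.
  set N : ℕ := d.natAbs + ∑ i ∈ s, (e i).natAbs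
  have hN : ∀ i ∈ s, 0 ≤ e i + N := fun i hi => by
    have hle := single_le_sum (f := fun i => (e i).natAbs) (fun _ _ => Nat.zero_le _) hi
    omega
  set P : Polynomial ℂ := ∑ i ∈ s, Polynomial.monomial (e i + N).toNat (c i)
  have hP : P = Polynomial.monomial N w := by
    refine Polynomial.eq_of_infinite_eval_eq _ _ (Complex.infinite_sphere_zero_one.mono ?_)
    intro z hz
    rw [mem_sphere_zero_iff_norm] at hz
    have hz0 : z ≠ 0 := norm_ne_zero_iff.mp (by rw [hz]; exact one_ne_zero)
    simp only [Set.mem_ofPred_eq, P, Polynomial.eval_finsetSum, Polynomial.eval_monomial,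
      ← h z hz, Finset.sum_mul]
    refine sum_congr rfl fun i hi => ?_
    rw [← zpow_natCast, Int.toNat_of_nonneg (hN i hi), zpow_add₀ hz0, zpow_natCast]
    ring
  have hcoeff := congrArg (Polynomial.coeff · (d + N).toNat) hP
  simp only [P, Polynomial.finsetSum_coeff, Polynomial.coeff_monomial] at hcoeff
  rw [sum_filter]
  convert hcoeff using 3 with i hi
  · have := hN i hi
    omega
  · omega

theorem Complex.star_zpow_of_norm_eq_one {z : ℂ} (hz : ‖z‖ = 1) (k : ℤ) :
    star (z ^ k) = z ^ (-k) := by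
  rw [star_zpow₀, Complex.star_def, ← Complex.inv_eq_conj hz, _root_.inv_zpow']

theorem sum_mul_conjTranspose_shift_eq_ite_of_coisometry {p q : Type*} [Fintype q]
    [DecidableEq p] (B : ℕ → Matrix p q ℂ) (n : ℕ)
    (hcoiso : ∀ z : ℂ, ‖z‖ = 1 →
      (∑ j ∈ range n, z ^ (-(j + 1 : ℤ)) • B (j + 1)) *
        (∑ j ∈ range n, z ^ (-(j + 1 : ℤ)) • B (j + 1))ᴴ = 1) (d : ℕ) :
    ∑ s ∈ range (n - d), B (s + 1) * (B (s + 1 + d))ᴴ = if d = 0 then 1 else 0 := by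
  have hexpand : ∀ z : ℂ, ‖z‖ = 1 → ∑ x ∈ range n ×ˢ range n,
      z ^ ((x.2 : ℤ) - x.1) • (B (x.1 + 1) * (B (x.2 + 1))ᴴ) = 1 := by
    intro z hz
    rw [← hcoiso z hz, sum_product]
    simp only [Matrix.sum_mul, Matrix.mul_sum, conjTranspose_sum, conjTranspose_smul,
      Matrix.smul_mul, Matrix.mul_smul, Finset.smul_sum, smul_smul,
      Complex.star_zpow_of_norm_eq_one hz]
    rw [sum_comm]
    refine sum_congr rfl fun j _ => sum_congr rfl fun k _ => ?_
    rw [← zpow_add₀ (by rintro rfl; simp at hz)]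
    congr 2
    ring
  have hfilter : {x ∈ range n ×ˢ range n | (x.2 : ℤ) - x.1 = d} =
      (range (n - d)).image fun s => (s, s + d) := by
    ext ⟨j, k⟩
    simp only [mem_filter, mem_product, mem_range, mem_image, Prod.mk.injEq]
    constructor
    · rintro ⟨⟨hj, hk⟩, hjk⟩
      exact ⟨j, by omega, rfl, by omega⟩
    · rintro ⟨s, hs, rfl, rfl⟩
      omega
  ext a c
  have hcoeff := sum_filter_eq_ite_of_sum_zpow_eq_const_on_circle (range n ×ˢ range n)
    (fun x => (x.2 : ℤ) - x.1) (fun x => (B (x.1 + 1) * (B (x.2 + 1))ᴴ) a c)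
    ((1 : Matrix p p ℂ) a c)
    (fun z hz => by simpa [Matrix.sum_apply] using congrFun (congrFun (hexpand z hz) a) c) d
  rw [hfilter, sum_image (by simp)] at hcoeff
  simpa [Matrix.sum_apply, add_assoc, add_comm 1 d, apply_ite (fun M : Matrix p p ℂ => M a c)]
    using hcoeff

section BlockMatrices

variable {ι κ R : Type*}

def blockHankel [Zero R] (B : ℕ → Matrix ι κ R) (n : ℕ) : Matrix (Fin n × ι) (Fin n × κ) R :=
  of fun x y => if x.1.val + y.1.val + 1 ≤ n then B (x.1.val + y.1.val + 1) x.2 y.2 else 0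

def strictLowerBlockToeplitz [Zero R] (B : ℕ → Matrix ι κ R) (n : ℕ) :
    Matrix (Fin n × ι) (Fin n × κ) R :=
  of fun x y => if y.1 < x.1 then B (x.1.val - y.1.val) x.2 y.2 else 0

theorem strictLowerBlockToeplitz_apply_of_fst_eq_zero [Zero R] (B : ℕ → Matrix ι κ R) {n : ℕ}
    {x : Fin n × ι} (hx : (x.1 : ℕ) = 0) (y : Fin n × κ) :
    strictLowerBlockToeplitz B n x y = 0 := by
  have : ¬ y.1 < x.1 := by omega
  simp [strictLowerBlockToeplitz, this]

variable [Fintype κ] [NonUnitalSemiring R] [StarRing R] (B : ℕ → Matrix ι κ R) {n : ℕ}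

theorem blockHankel_mul_conjTranspose_apply {i k : Fin n} (hik : i ≤ k) (a c : ι) :
    (blockHankel B n * (blockHankel B n)ᴴ) (i, a) (k, c) =
      ∑ s ∈ Ico (i : ℕ) (n - (k - i)), (B (s + 1) * (B (s + 1 + (k - i)))ᴴ) a c := by
  have hblock : ∀ j : Fin n, ∑ b, blockHankel B n (i, a) (j, b) *
      star (blockHankel B n (k, c) (j, b)) =
        if k + j + 1 ≤ n then (B (i + j + 1) * (B (k + j + 1))ᴴ) a c else 0 := by
    intro j
    simp only [blockHankel, of_apply]
    split_ifs <;> first | omega | simp [mul_apply]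
  rw [mul_apply, Fintype.sum_prod_type]
  simp only [conjTranspose_apply, hblock]
  rw [Fin.sum_univ_eq_sum_range
      (fun j => if k + j + 1 ≤ n then (B (i + j + 1) * (B (k + j + 1))ᴴ) a c else 0),
    ← sum_filter, sum_Ico_eq_sum_range]
  have hfilter : {j ∈ range n | (k : ℕ) + j + 1 ≤ n} = range (n - (k - i) - i) := by
    ext j
    simp only [mem_filter, mem_range]
    omega
  refine sum_congr hfilter fun j _ => ?_
  rw [show i + j + 1 + (k - i) = k + j + 1 by omega]

theorem strictLowerBlockToeplitz_mul_conjTranspose_apply {i k : Fin n} (hik : i ≤ k) (a c : ι) :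
    (strictLowerBlockToeplitz B n * (strictLowerBlockToeplitz B n)ᴴ) (i, a) (k, c) =
      ∑ s ∈ range i, (B (s + 1) * (B (s + 1 + (k - i)))ᴴ) a c := by
  have hblock : ∀ u : Fin n, ∑ b, strictLowerBlockToeplitz B n (i, a) (u, b) *
      star (strictLowerBlockToeplitz B n (k, c) (u, b)) =
        if u < (i : ℕ) then (B (i - u) * (B (k - u))ᴴ) a c else 0 := by
    intro u
    simp only [strictLowerBlockToeplitz, of_apply]
    split_ifs <;> first | omega | simp [mul_apply]
  rw [mul_apply, Fintype.sum_prod_type]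
  simp only [conjTranspose_apply, hblock]
  rw [Fin.sum_univ_eq_sum_range
      (fun u => if u < (i : ℕ) then (B (i - u) * (B (k - u))ᴴ) a c else 0),
    ← sum_filter, ← sum_range_reflect]
  have hfilter : {u ∈ range n | u < (i : ℕ)} = range i := by
    ext u
    simp only [mem_filter, mem_range]
    omega
  refine sum_congr hfilter fun s hs => ?_
  rw [mem_range] at hs
  rw [show (i : ℕ) - 1 - s + 1 = i - s by omega, show (i : ℕ) - s + (k - i) = k - s by omega]

theorem blockHankel_mul_conjTranspose_add_strictLowerBlockToeplitz_mul_conjTranspose_apply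
    {i k : Fin n} (hik : i ≤ k) (a c : ι) :
    (blockHankel B n * (blockHankel B n)ᴴ +
        strictLowerBlockToeplitz B n * (strictLowerBlockToeplitz B n)ᴴ) (i, a) (k, c) =
      (∑ s ∈ range (n - (k - i)), B (s + 1) * (B (s + 1 + (k - i)))ᴴ) a c := by
  rw [Matrix.add_apply, blockHankel_mul_conjTranspose_apply B hik,
    strictLowerBlockToeplitz_mul_conjTranspose_apply B hik, add_comm,
    sum_range_add_sum_Ico _ (by omega), Matrix.sum_apply]

theorem strictLowerBlockToeplitz_mul_conjTranspose_apply_eq_zero {x y : Fin n × ι}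
    (h : (x.1 : ℕ) = 0 ∨ (y.1 : ℕ) = 0) :
    (strictLowerBlockToeplitz B n * (strictLowerBlockToeplitz B n)ᴴ) x y = 0 := by
  rw [mul_apply]
  refine sum_eq_zero fun z _ => ?_
  rcases h with h | h <;>
    simp [conjTranspose_apply, strictLowerBlockToeplitz_apply_of_fst_eq_zero B h]

end BlockMatrices

theorem blockHankel_mul_conjTranspose_add_strictLowerBlockToeplitz_mul_conjTranspose
    {p q : Type*} [Fintype q] [DecidableEq p] (B : ℕ → Matrix p q ℂ) (n : ℕ)
    (hcoiso : ∀ z : ℂ, ‖z‖ = 1 →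
      (∑ j ∈ range n, z ^ (-(j + 1 : ℤ)) • B (j + 1)) *
        (∑ j ∈ range n, z ^ (-(j + 1 : ℤ)) • B (j + 1))ᴴ = 1) :
    blockHankel B n * (blockHankel B n)ᴴ +
      strictLowerBlockToeplitz B n * (strictLowerBlockToeplitz B n)ᴴ = 1 := by
  have hS : (blockHankel B n * (blockHankel B n)ᴴ +
      strictLowerBlockToeplitz B n * (strictLowerBlockToeplitz B n)ᴴ).IsHermitian :=
    (isHermitian_mul_conjTranspose_self _).add (isHermitian_mul_conjTranspose_self _)
  have hle : ∀ {i k : Fin n}, i ≤ k → ∀ a c, (blockHankel B n * (blockHankel B n)ᴴ +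
      strictLowerBlockToeplitz B n * (strictLowerBlockToeplitz B n)ᴴ) (i, a) (k, c) =
        (1 : Matrix (Fin n × p) (Fin n × p) ℂ) (i, a) (k, c) := by
    intro i k hik a c
    rw [blockHankel_mul_conjTranspose_add_strictLowerBlockToeplitz_mul_conjTranspose_apply B hik,
      sum_mul_conjTranspose_shift_eq_ite_of_coisometry B n hcoiso]
    rcases hik.eq_or_lt with rfl | hlt
    · simp [one_apply]
    · simp [one_apply, hlt.ne, show (k : ℕ) - i ≠ 0 by omega]
  ext ⟨i, a⟩ ⟨k, c⟩
  rcases le_total i k with hik | hki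
  · exact hle hik a c
  · rw [← hS.apply, hle hki c a, isHermitian_one.apply]

/-- If `F₀(z) = ∑_{j=1}^n z^{-j} B_j` is co-isometric on the unit circle,
then `I - H₀ H₀ᴴ` is positive semidefinite, bounded above by `I` in the Loewner
order, and its entries vanish on the first `p` rows and first `p` columns
(i.e. it has the form `diag(0_{p×p}, Δ)` with `0 ≤ Δ ≤ I`). -/
theorem fir_coisometry_hankel_structure
    (p m n : ℕ) (B : ℕ → Matrix (Fin p) (Fin m) ℂ)
    (H₀ : Matrix (Fin n × Fin p) (Fin n × Fin m) ℂ)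
    (hH₀ : ∀ (i j : Fin n) (a : Fin p) (b : Fin m),
      H₀ (i, a) (j, b) = if i.val + j.val + 1 ≤ n then B (i.val + j.val + 1) a b else 0)
    (hcoiso : ∀ z : ℂ, ‖z‖ = 1 →
      (∑ j ∈ Finset.range n, z ^ (-(j + 1 : ℤ)) • B (j + 1)) *
        (∑ j ∈ Finset.range n, z ^ (-(j + 1 : ℤ)) • B (j + 1))ᴴ = 1) :
    (1 - H₀ * H₀ᴴ).PosSemidef ∧
    (1 - (1 - H₀ * H₀ᴴ)).PosSemidef ∧
    (∀ (j k : Fin n) (b c : Fin p), (j.val = 0 ∨ k.val = 0) →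
      ((1 - H₀ * H₀ᴴ : Matrix (Fin n × Fin p) (Fin n × Fin p) ℂ) (j, b)) (k, c) = 0) := by
  obtain rfl : H₀ = blockHankel B n := by
    ext ⟨i, a⟩ ⟨j, b⟩
    exact hH₀ i j a b
  have hdefect : 1 - blockHankel B n * (blockHankel B n)ᴴ =
      strictLowerBlockToeplitz B n * (strictLowerBlockToeplitz B n)ᴴ := by
    rw [← blockHankel_mul_conjTranspose_add_strictLowerBlockToeplitz_mul_conjTranspose B n
      hcoiso, add_sub_cancel_left]
  refine ⟨?_, ?_, fun j k b c hjk => ?_⟩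
  · rw [hdefect]
    exact posSemidef_self_mul_conjTranspose _
  · rw [sub_sub_cancel]
    exact posSemidef_self_mul_conjTranspose _
  · rw [hdefect]
    exact strictLowerBlockToeplitz_mul_conjTranspose_apply_eq_zero B hjk
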